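/- arXiv:2011.03008 — 4 statements merged into one kernel-verified Lean document; each statement's English description precedes it below -/
import Mathlib

section
/- Let A be a commutative ring, S ⊆ A multiplicatively closed, M an S-finite A-module, and N ⊆ M maximal among the submodules of M that are not S-finite. Then N is a prime submodule of M: whenever m ∈ M and a ∈ A satisfy m·a ∈ N, either m ∈ N or a ∈ (N : M). -/
/-- A submodule `N` is `S`-finite if there is a finitely generated submodule `F ⊆ N`
and `s ∈ S` with `N • s ⊆ F`. -/
def SFin {A : Type*} [CommRing A] (S : Submonoid A) {M : Type*} [AddCommGroup M]
    [Module A M] (N : Submodule A M) : Prop :=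
  ∃ F : Submodule A M, F.FG ∧ F ≤ N ∧ ∃ s ∈ S, ∀ x ∈ N, s • x ∈ F

/-- A module `M` is `S`-noetherian if every submodule is `S`-finite. -/
def SNoeth {A : Type*} [CommRing A] (S : Submonoid A) (M : Type*) [AddCommGroup M]
    [Module A M] : Prop :=
  ∀ N : Submodule A M, SFin S N

/-! If `N` is not `S`-finite but `a • m ∈ N` with `m ∉ N` and `a • M ⊄ N`, then both `N + a M` and
`(N : a) = {x | a • x ∈ N}` strictly contain `N`, hence are `S`-finite by maximality. Write
`s (N + a M) ⊆ F` and `t (N : a) ⊆ G` with `F`, `G` finitely generated, and split the generators of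
`F` as `nᵢ + a xᵢ` with `nᵢ ∈ N`. For `z ∈ N` we get `s z = u + a y` with `u ∈ ⟨nᵢ⟩`, so
`a y ∈ N`, and then `t s z = t u + a (t y) ∈ ⟨nᵢ⟩ + a G ⊆ N`: `N` would be `S`-finite. -/

namespace Submodule

variable {R M : Type*} [Semiring R] [AddCommMonoid M] [Module R M]

theorem exists_fg_le_and_le_sup_of_fg_le_sup {F N P : Submodule R M} (hF : F.FG)
    (hle : F ≤ N ⊔ P) : ∃ F₀ : Submodule R M, F₀.FG ∧ F₀ ≤ N ∧ F ≤ F₀ ⊔ P := by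
  classical
  obtain ⟨T, rfl⟩ := hF
  have hsplit : ∀ f ∈ T, ∃ n ∈ N, ∃ p ∈ P, n + p = f := fun f hf =>
    mem_sup.1 (hle (subset_span hf))
  choose! n hnN p hpP hnp using hsplit
  refine ⟨span R (n '' T), fg_span (T.finite_toSet.image n), ?_, ?_⟩
  · exact span_le.2 (Set.image_subset_iff.2 hnN)
  · refine span_le.2 fun f hf => ?_
    rw [← hnp f hf]
    exact add_mem_sup (subset_span ⟨f, hf, rfl⟩) (hpP f hf)

end Submodule

section

variable {A M P : Type*} [CommRing A] [AddCommGroup M] [Module A M] [AddCommGroup P] [Module A P]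

theorem SFin.of_sup_range_of_comap {S : Submonoid A} {N : Submodule A M} (φ : P →ₗ[A] M)
    (hsup : SFin S (N ⊔ LinearMap.range φ)) (hcomap : SFin S (N.comap φ)) : SFin S N := by
  obtain ⟨F, hFfg, hFle, s, hs, hsF⟩ := hsup
  obtain ⟨G, hGfg, hGle, t, ht, htG⟩ := hcomap
  obtain ⟨F₀, hF₀fg, hF₀N, hFF₀⟩ := Submodule.exists_fg_le_and_le_sup_of_fg_le_sup hFfg hFle
  refine ⟨F₀ ⊔ G.map φ, hF₀fg.sup (hGfg.map φ), sup_le hF₀N ?_, t * s, S.mul_mem ht hs,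
    fun z hz => ?_⟩
  · exact Submodule.map_le_iff_le_comap.2 hGle
  obtain ⟨u, hu, _, ⟨y, rfl⟩, hsz⟩ :=
    Submodule.mem_sup.1 (hFF₀ (hsF z (Submodule.mem_sup_left hz)))
  have hφy : φ y ∈ N := by
    rw [← add_sub_cancel_left u (φ y), hsz]
    exact N.sub_mem (N.smul_mem s hz) (hF₀N hu)
  have hts : (t * s) • z = t • u + φ (t • y) := by
    rw [mul_smul, ← hsz, smul_add, map_smul]
  rw [hts]
  exact Submodule.add_mem_sup (F₀.smul_mem t hu) ⟨t • y, htG y hφy, rfl⟩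

end

theorem stmt7_general {A : Type*} [CommRing A] (S : Submonoid A) {M : Type*} [AddCommGroup M]
    [Module A M] (N : Submodule A M)
    (hN : ¬ SFin S N) (hmax : ∀ N' : Submodule A M, N < N' → SFin S N') :
    ∀ (m : M) (a : A), a • m ∈ N → m ∈ N ∨ ∀ x : M, a • x ∈ N := by
  intro m a ham
  by_contra! ⟨hm, x, hx⟩
  let φ : M →ₗ[A] M := a • LinearMap.id
  have hsup : N < N ⊔ LinearMap.range φ :=
    lt_of_le_of_ne le_sup_left fun h => hx (h ▸ Submodule.mem_sup_right ⟨x, rfl⟩)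
  have hcomap : N < N.comap φ :=
    lt_of_le_of_ne (fun y hy => N.smul_mem a hy) fun h => hm (h ▸ ham)
  exact hN ((hmax _ hsup).of_sup_range_of_comap φ (hmax _ hcomap))

theorem stmt7 {A : Type*} [CommRing A] (S : Submonoid A) {M : Type*} [AddCommGroup M]
    [Module A M] (hM : SFin S (⊤ : Submodule A M)) (N : Submodule A M)
    (hN : ¬ SFin S N) (hmax : ∀ N' : Submodule A M, N < N' → SFin S N') :
    ∀ (m : M) (a : A), a • m ∈ N → m ∈ N ∨ ∀ x : M, a • x ∈ N :=
  stmt7_general S N hN hmax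
end

section
/- Let A be a commutative ring, S ⊆ A multiplicatively closed, and M an S-finite A-module. Then M is S-noetherian if and only if for every prime ideal p of A with p ∩ S = ∅ the submodule M·p is S-finite. -/
/-!
As in Cohen's theorem: if `M` is not `S`-noetherian, Zorn's lemma
gives a submodule `N` maximal among the non-`S`-finite ones (`S`-finiteness passes from the union
of a chain to a member, as finitely generated submodules are compact). Its colon ideal
`p = (N : M)` misses `S` and is prime, and some `m₀` has `(N : m₀) = p`. Then `N + A m₀` is
`S`-finite by maximality and `N ∩ A m₀ = p m₀ ⊆ p M ⊆ N`, so if `p M` is `S`-finite, so is `N`.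
-/

section

variable {A : Type*} [CommRing A] {S : Submonoid A} {M : Type*} [AddCommGroup M] [Module A M]

lemma Submodule.mem_colon_univ {N : Submodule A M} {a : A} :
    a ∈ N.colon Set.univ ↔ ∀ m, a • m ∈ N := by
  simp [Submodule.mem_colon]

lemma Submodule.exists_fg_le_sup_of_fg_le_sup {F N K : Submodule A M} (hF : F.FG)
    (hle : F ≤ N ⊔ K) : ∃ N₁ ≤ N, N₁.FG ∧ F ≤ N₁ ⊔ K := by
  induction F, hF using Submodule.fg_induction with
  | singleton x =>
    obtain ⟨y, hy, z, hz, rfl⟩ := Submodule.mem_sup.mp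
      (hle (Submodule.mem_span_singleton_self x))
    refine ⟨A ∙ y, (Submodule.span_singleton_le_iff_mem y N).mpr hy,
      Submodule.fg_span_singleton y, (Submodule.span_singleton_le_iff_mem _ _).mpr ?_⟩
    exact Submodule.add_mem_sup (Submodule.mem_span_singleton_self y) hz
  | sup F₁ F₂ _ _ ih₁ ih₂ =>
    obtain ⟨N₁, hN₁, hN₁fg, hF₁⟩ := ih₁ (le_sup_left.trans hle)
    obtain ⟨N₂, hN₂, hN₂fg, hF₂⟩ := ih₂ (le_sup_right.trans hle)
    refine ⟨N₁ ⊔ N₂, sup_le hN₁ hN₂, hN₁fg.sup hN₂fg, sup_le ?_ ?_⟩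
    · exact hF₁.trans (sup_le_sup_right le_sup_left K)
    · exact hF₂.trans (sup_le_sup_right le_sup_right K)

lemma Ideal.exists_notMem_forall_smul_mem_of_fg {p : Ideal A} [p.IsPrime]
    {N F : Submodule A M} (hF : F.FG) (h : ∀ m : M, ∃ a ∉ p, a • m ∈ N) :
    ∃ d ∉ p, ∀ x ∈ F, d • x ∈ N := by
  induction F, hF using Submodule.fg_induction with
  | singleton x =>
    obtain ⟨a, ha, hax⟩ := h x
    refine ⟨a, ha, fun y hy => ?_⟩
    obtain ⟨c, rfl⟩ := Submodule.mem_span_singleton.mp hy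
    rw [smul_comm]
    exact N.smul_mem c hax
  | sup F₁ F₂ _ _ ih₁ ih₂ =>
    obtain ⟨d₁, hd₁, h₁⟩ := ih₁
    obtain ⟨d₂, hd₂, h₂⟩ := ih₂
    refine ⟨d₁ * d₂, Ideal.IsPrime.mul_notMem ‹_› hd₁ hd₂, fun x hx => ?_⟩
    obtain ⟨y, hy, z, hz, rfl⟩ := Submodule.mem_sup.mp hx
    rw [smul_add, mul_comm, mul_smul, mul_comm, mul_smul]
    exact N.add_mem (N.smul_mem d₂ (h₁ y hy)) (N.smul_mem d₁ (h₂ z hz))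

namespace SFin

lemma map {N : Submodule A M} (h : SFin S N) {M' : Type*} [AddCommGroup M'] [Module A M']
    (f : M →ₗ[A] M') : SFin S (N.map f) := by
  obtain ⟨F, hF, hFN, s, hs, hsF⟩ := h
  refine ⟨F.map f, hF.map f, Submodule.map_mono hFN, s, hs, ?_⟩
  rintro _ ⟨x, hx, rfl⟩
  exact ⟨s • x, hsF x hx, map_smul f s x⟩

lemma of_smul_mem {N : Submodule A M} (hM : SFin S (⊤ : Submodule A M)) {s : A} (hs : s ∈ S)
    (h : ∀ m, s • m ∈ N) : SFin S N := by
  obtain ⟨F, hF, -, t, ht, htF⟩ := hM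
  refine ⟨F.map (LinearMap.lsmul A M s), hF.map _, ?_, s * t, mul_mem hs ht, fun x _ => ?_⟩
  · rintro _ ⟨y, -, rfl⟩
    exact h y
  · rw [mul_smul]
    exact ⟨t • x, htF x trivial, rfl⟩

lemma of_sup {N K P : Submodule A M} (hsup : SFin S (N ⊔ K)) (hP : SFin S P) (hPN : P ≤ N)
    (hinf : N ⊓ K ≤ P) : SFin S N := by
  obtain ⟨F, hF, hFle, s₁, hs₁, hs₁F⟩ := hsup
  obtain ⟨G, hG, hGP, s₂, hs₂, hs₂G⟩ := hP
  obtain ⟨N₁, hN₁N, hN₁, hFN₁⟩ := Submodule.exists_fg_le_sup_of_fg_le_sup hF hFle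
  refine ⟨N₁ ⊔ G, hN₁.sup hG, sup_le hN₁N (hGP.trans hPN), s₂ * s₁, mul_mem hs₂ hs₁,
    fun x hx => ?_⟩
  obtain ⟨y, hy, z, hz, hyz⟩ := Submodule.mem_sup.mp (hFN₁ (hs₁F x (Submodule.mem_sup_left hx)))
  have hzN : z ∈ N := by
    rw [show z = s₁ • x - y by rw [← hyz]; abel]
    exact N.sub_mem (N.smul_mem s₁ hx) (hN₁N hy)
  rw [mul_smul, ← hyz, smul_add]
  exact Submodule.add_mem_sup (N₁.smul_mem s₂ hy) (hs₂G z (hinf ⟨hzN, hz⟩))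

lemma exists_mem_of_isChain {c : Set (Submodule A M)} (hc : IsChain (· ≤ ·) c)
    (hne : c.Nonempty) (h : SFin S (sSup c)) : ∃ N ∈ c, SFin S N := by
  obtain ⟨F, hF, hFle, s, hs, hsF⟩ := h
  obtain ⟨N, hNc, hFN⟩ :=
    (CompleteLattice.isCompactElement_iff_le_of_directed_sSup_le (Submodule A M) F).mp
      ((Submodule.fg_iff_compact F).mp hF) c hne hc.directedOn hFle
  exact ⟨N, hNc, F, hF, hFN, s, hs, fun x hx => hsF x (le_sSup hNc hx)⟩

end SFin

lemma exists_maximal_not_sFin (h : ¬ SNoeth S M) :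
    ∃ N : Submodule A M, Maximal (fun N => ¬ SFin S N) N := by
  obtain ⟨N₀, hN₀⟩ := not_forall.mp h
  obtain ⟨N, -, hN⟩ := zorn_le_nonempty₀ {N : Submodule A M | ¬ SFin S N}
    (fun c hcS hc N hN => ⟨sSup c, fun hsup =>
      (SFin.exists_mem_of_isChain hc ⟨N, hN⟩ hsup).elim fun _ hN' => hcS hN'.1 hN'.2,
      fun _ => le_sSup⟩) N₀ hN₀
  exact ⟨N, hN⟩

lemma Submodule.exists_colon_singleton_le_colon_univ {N : Submodule A M}
    (hM : SFin S (⊤ : Submodule A M)) (hp : (N.colon Set.univ).IsPrime)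
    (hpS : ∀ s ∈ S, s ∉ N.colon Set.univ) :
    ∃ m₀ : M, N.colon {m₀} ≤ N.colon Set.univ := by
  by_contra! h
  obtain ⟨F, hF, -, t, ht, htF⟩ := hM
  obtain ⟨d, hd, hdF⟩ := Ideal.exists_notMem_forall_smul_mem_of_fg (p := N.colon Set.univ) hF
    fun m => by
      obtain ⟨a, ham, hap⟩ := SetLike.not_le_iff_exists.mp (h m)
      exact ⟨a, hap, Submodule.mem_colon_singleton.mp ham⟩
  have hdt : d * t ∈ N.colon Set.univ :=
    Submodule.mem_colon_univ.mpr fun m => mul_smul d t m ▸ hdF _ (htF m trivial)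
  exact (hp.mem_or_mem hdt).elim hd (hpS t ht)

variable {N : Submodule A M}

lemma Maximal.sFin_of_gt {N' : Submodule A M} (hN : Maximal (fun N => ¬ SFin S N) N)
    (hlt : N < N') : SFin S N' :=
  not_not.mp (hN.not_prop_of_gt hlt)

lemma Maximal.notMem_colon_univ (hN : Maximal (fun N => ¬ SFin S N) N)
    (hM : SFin S (⊤ : Submodule A M)) :
    ∀ s ∈ S, s ∉ N.colon Set.univ := fun _s hs hsN =>
  hN.prop (SFin.of_smul_mem hM hs (Submodule.mem_colon_univ.mp hsN))

lemma Maximal.isPrime_colon_univ (hN : Maximal (fun N => ¬ SFin S N) N)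
    (hM : SFin S (⊤ : Submodule A M)) :
    (N.colon Set.univ).IsPrime := by
  refine ⟨fun htop => hN.notMem_colon_univ hM 1 S.one_mem (htop ▸ trivial), fun {a b} hab => ?_⟩
  by_contra! hnot
  obtain ⟨ha, hb⟩ := hnot
  obtain ⟨m, hm⟩ := not_forall.mp (mt Submodule.mem_colon_univ.mpr ha)
  obtain ⟨m', hm'⟩ := not_forall.mp (mt Submodule.mem_colon_univ.mpr hb)
  -- `N + bM` and `(N : b)` both strictly contain `N`, and `N ∩ bM = b (N : b)`.
  set f := LinearMap.lsmul A M b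
  have hcomap : N < N.comap f := SetLike.lt_iff_le_and_exists.mpr
    ⟨fun x hx => N.smul_mem b hx, a • m, by
      simpa [f, smul_smul, mul_comm b a] using Submodule.mem_colon_univ.mp hab m, hm⟩
  have hsup : N < N ⊔ LinearMap.range f := SetLike.lt_iff_le_and_exists.mpr
    ⟨le_sup_left, b • m', Submodule.mem_sup_right ⟨m', rfl⟩, hm'⟩
  refine hN.prop ((hN.sFin_of_gt hsup).of_sup ((hN.sFin_of_gt hcomap).map f) ?_ ?_)
  · exact Submodule.map_comap_le f N
  · rw [Submodule.map_comap_eq, inf_comm]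

lemma Maximal.not_sFin_colon_univ_smul_top (hN : Maximal (fun N => ¬ SFin S N) N)
    (hM : SFin S (⊤ : Submodule A M)) :
    ¬ SFin S (N.colon Set.univ • (⊤ : Submodule A M)) := by
  intro hpM
  have hpS := hN.notMem_colon_univ hM
  obtain ⟨m₀, hm₀⟩ := Submodule.exists_colon_singleton_le_colon_univ hM
    (hN.isPrime_colon_univ hM) hpS
  have hm₀N : m₀ ∉ N := fun h =>
    hpS 1 S.one_mem (hm₀ (Submodule.mem_colon_singleton.mpr (by simpa using h)))
  have hlt : N < N ⊔ (A ∙ m₀) := SetLike.lt_iff_le_and_exists.mpr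
    ⟨le_sup_left, m₀, Submodule.mem_sup_right (Submodule.mem_span_singleton_self m₀), hm₀N⟩
  refine hN.prop ((hN.sFin_of_gt hlt).of_sup hpM ?_ ?_)
  · exact Submodule.smul_le.mpr fun a ha m _ => Submodule.mem_colon_univ.mp ha m
  · rintro x ⟨hxN, hx⟩
    obtain ⟨c, rfl⟩ := Submodule.mem_span_singleton.mp hx
    exact Submodule.smul_mem_smul (hm₀ (Submodule.mem_colon_singleton.mpr hxN)) trivial

end

theorem stmt9 {A : Type*} [CommRing A] (S : Submonoid A) {M : Type*} [AddCommGroup M]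
    [Module A M] (hM : SFin S (⊤ : Submodule A M)) :
    SNoeth S M ↔
      ∀ p : Ideal A, p.IsPrime → (∀ s ∈ S, s ∉ p) →
        SFin S (p • (⊤ : Submodule A M)) := by
  refine ⟨fun h p _ _ => h _, fun H => ?_⟩
  by_contra hM'
  obtain ⟨N, hN⟩ := exists_maximal_not_sFin hM'
  exact hN.not_sFin_colon_univ_smul_top hM
    (H _ (hN.isPrime_colon_univ hM) (hN.notMem_colon_univ hM))
end

section
/- (Relative Eakin–Nagata) Let A ⊆ B be an extension of commutative rings and S ⊆ A a multiplicatively closed subset. If B is S-finite as an A-module and B is S-noetherian as a B-module (for the image of S in B), then A is S-noetherian. -/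
open Submodule

namespace Ideal

variable {R : Type*} [CommRing R]

def saturation (S : Submonoid R) (I : Ideal R) : Ideal R where
  carrier := {x | ∃ t ∈ S, t * x ∈ I}
  add_mem' := by
    rintro x y ⟨t, ht, hx⟩ ⟨t', ht', hy⟩
    refine ⟨t * t', mul_mem ht ht', ?_⟩
    have : t * t' * (x + y) = t' * (t * x) + t * (t' * y) := by ring
    rw [this]
    exact add_mem (I.mul_mem_left _ hx) (I.mul_mem_left _ hy)
  zero_mem' := ⟨1, one_mem _, by simp⟩
  smul_mem' c x := by
    rintro ⟨t, ht, hx⟩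
    exact ⟨t, ht, by simpa [mul_left_comm] using I.mul_mem_left c hx⟩

theorem exists_mem_forall_mul_mem_of_sNoeth {S : Submonoid R} (hR : SNoeth S R) (I : Ideal R) :
    ∃ u ∈ S, ∀ x ∈ I.saturation S, u * x ∈ I := by
  classical
  obtain ⟨F, ⟨T, rfl⟩, hFI, s, hs, hsF⟩ := hR (I.saturation S)
  choose! t ht htI using fun g (hg : g ∈ T) => hFI (subset_span hg)
  refine ⟨(∏ g ∈ T, t g) * s, mul_mem (Submonoid.prod_mem S ht) hs, fun x hx => ?_⟩
  have hT : Submodule.span R (T : Set R) ≤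
      Submodule.comap (LinearMap.mulLeft R (∏ g ∈ T, t g)) I := by
    refine Submodule.span_le.2 fun g hg => ?_
    rw [SetLike.mem_coe, Submodule.mem_comap, LinearMap.mulLeft_apply,
      ← Finset.prod_erase_mul _ _ hg, mul_assoc]
    exact I.mul_mem_left _ (htI g hg)
  simpa [mul_assoc] using hT (hsF x hx)

end Ideal

section Module

variable {A M M' : Type*} [CommRing A] [AddCommGroup M] [Module A M] [AddCommGroup M']
  [Module A M'] {S : Submonoid A}

theorem Submodule.exists_fg_le_map_eq {f : M →ₗ[A] M'} {N : Submodule A M} {P : Submodule A M'}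
    (hP : P.FG) (hPN : P ≤ N.map f) : ∃ F : Submodule A M, F.FG ∧ F ≤ N ∧ F.map f = P := by
  obtain ⟨T, rfl⟩ := hP
  choose g hgN hg using fun t : T => hPN (subset_span t.2)
  refine ⟨span A (Set.range g), fg_span (Set.finite_range g),
    span_le.2 (Set.range_subset_iff.2 hgN), ?_⟩
  rw [map_span, ← Set.range_comp]
  congr
  ext
  simp [hg]

theorem Submodule.exists_fg_le_of_le_sup {P N K : Submodule A M} (hP : P.FG) (h : P ≤ N ⊔ K) :
    ∃ F : Submodule A M, F.FG ∧ F ≤ N ∧ P ≤ F ⊔ K := by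
  have hPN : P.map K.mkQ ≤ N.map K.mkQ := by
    rwa [map_le_iff_le_comap, comap_map_mkQ, sup_comm]
  obtain ⟨F, hF, hFN, hFP⟩ := exists_fg_le_map_eq (hP.map K.mkQ) hPN
  refine ⟨F, hF, hFN, ?_⟩
  rw [sup_comm, ← comap_map_mkQ, hFP, ← map_le_iff_le_comap]

variable (S) in
/-- `SFinMod S J N` says that the image of `N` in `M ⧸ J` is `S`-finite, with the finitely
generated submodule chosen inside `N`. -/
def SFinMod (J N : Submodule A M) : Prop :=
  ∃ F : Submodule A M, F.FG ∧ F ≤ N ∧ ∃ s ∈ S, ∀ x ∈ N, s • x ∈ F ⊔ J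

variable (S) in
/-- `SNoethMod S J` says that `M ⧸ J` is `S`-noetherian. -/
def SNoethMod (J : Submodule A M) : Prop :=
  ∀ N : Submodule A M, SFinMod S J N

theorem sFinMod_bot_iff {N : Submodule A M} : SFinMod S ⊥ N ↔ SFin S N := by
  simp [SFinMod, SFin]

theorem sNoethMod_bot_iff : SNoethMod S (⊥ : Submodule A M) ↔ SNoeth S M :=
  forall_congr' fun _ => sFinMod_bot_iff

theorem sFinMod_of_smul_mem {J N : Submodule A M} {t : A} (ht : t ∈ S)
    (h : ∀ x ∈ N, t • x ∈ J) : SFinMod S J N :=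
  ⟨⊥, fg_bot, bot_le, t, ht, fun x hx => by simpa using h x hx⟩

theorem SFinMod.mono {J J' N : Submodule A M} (hJ : J ≤ J') (h : SFinMod S J N) :
    SFinMod S J' N :=
  let ⟨F, hF, hFN, s, hs, h⟩ := h
  ⟨F, hF, hFN, s, hs, fun x hx => sup_le_sup_left hJ F (h x hx)⟩

theorem SFinMod.trans {J K N : Submodule A M} (hK : SFinMod S K N) (hJ : SFinMod S J (N ⊓ K)) :
    SFinMod S J N := by
  obtain ⟨F₁, hF₁, hF₁N, s₁, hs₁, h₁⟩ := hK
  obtain ⟨F₂, hF₂, hF₂N, s₂, hs₂, h₂⟩ := hJ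
  refine ⟨F₁ ⊔ F₂, hF₁.sup hF₂, sup_le hF₁N (hF₂N.trans inf_le_left), s₂ * s₁,
    mul_mem hs₂ hs₁, fun x hx => ?_⟩
  obtain ⟨f, hf, k, hk, hfk⟩ := mem_sup.1 (h₁ x hx)
  have hkN : k ∈ N ⊓ K :=
    ⟨eq_sub_of_add_eq' hfk ▸ sub_mem (N.smul_mem s₁ hx) (hF₁N hf), hk⟩
  obtain ⟨f', hf', j, hj, hfj⟩ := mem_sup.1 (h₂ k hkN)
  rw [mul_smul, ← hfk, smul_add, ← hfj]
  exact add_mem (mem_sup_left (mem_sup_left (F₁.smul_mem _ hf)))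
    (add_mem (mem_sup_left (mem_sup_right hf')) (mem_sup_right hj))

theorem sFinMod_sup_self_iff {J N : Submodule A M} : SFinMod S J (N ⊔ J) ↔ SFinMod S J N := by
  constructor
  · rintro ⟨F, hF, hFN, s, hs, h⟩
    obtain ⟨F', hF', hF'N, hFF'⟩ := exists_fg_le_of_le_sup hF hFN
    exact ⟨F', hF', hF'N, s, hs, fun x hx =>
      sup_le hFF' le_sup_right (h x (mem_sup_left hx))⟩
  · rintro ⟨F, hF, hFN, s, hs, h⟩
    refine ⟨F, hF, hFN.trans le_sup_left, s, hs, fun x hx => ?_⟩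
    obtain ⟨n, hn, j, hj, rfl⟩ := mem_sup.1 hx
    rw [smul_add]
    exact add_mem (h n hn) (mem_sup_right (J.smul_mem s hj))

theorem SFinMod.map {J N : Submodule A M} (f : M →ₗ[A] M') (h : SFinMod S J N) :
    SFinMod S (J.map f) (N.map f) := by
  obtain ⟨F, hF, hFN, s, hs, h⟩ := h
  refine ⟨F.map f, hF.map f, map_mono hFN, s, hs, ?_⟩
  rintro _ ⟨x, hx, rfl⟩
  rw [← map_smul, ← Submodule.map_sup]
  exact mem_map_of_mem (h x hx)

theorem SFinMod.comap {J' : Submodule A M'} {N : Submodule A M} (f : M →ₗ[A] M')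
    (h : SFinMod S J' (N.map f)) : SFinMod S (J'.comap f) N := by
  obtain ⟨F', hF', hF'N, s, hs, h⟩ := h
  obtain ⟨F, hF, hFN, rfl⟩ := exists_fg_le_map_eq hF' hF'N
  refine ⟨F, hF, hFN, s, hs, fun x hx => ?_⟩
  obtain ⟨_, ⟨y, hy, rfl⟩, j, hj, hyj⟩ := mem_sup.1 (h _ (mem_map_of_mem hx))
  have hxy : s • x - y ∈ J'.comap f := by
    rw [mem_comap, map_sub, map_smul, ← hyj, add_sub_cancel_left]
    exact hj
  rw [← add_sub_cancel y (s • x)]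
  exact add_mem (mem_sup_left hy) (mem_sup_right hxy)

theorem SNoethMod.comap {J' : Submodule A M'} (f : M →ₗ[A] M') (h : SNoethMod S J') :
    SNoethMod S (J'.comap f) :=
  fun N => (h (N.map f)).comap f

theorem SNoethMod.inf {K₁ K₂ : Submodule A M} (h₁ : SNoethMod S K₁) (h₂ : SNoethMod S K₂) :
    SNoethMod S (K₁ ⊓ K₂) := by
  intro N
  refine (h₁ N).trans ?_
  obtain ⟨F, hF, hFN, s, hs, h⟩ := h₂ (N ⊓ K₁)
  refine ⟨F, hF, hFN, s, hs, fun x hx => ?_⟩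
  obtain ⟨f, hf, k, hk, hfk⟩ := mem_sup.1 (h x hx)
  have hkK₁ : k ∈ K₁ := eq_sub_of_add_eq' hfk ▸ sub_mem (K₁.smul_mem s hx.2) (hFN hf).2
  rw [← hfk]
  exact add_mem (mem_sup_left hf) (mem_sup_right ⟨hkK₁, hk⟩)

theorem SNoethMod.iInf {ι : Type*} [Finite ι] {K : ι → Submodule A M}
    (h : ∀ i, SNoethMod S (K i)) : SNoethMod S (⨅ i, K i) := by
  classical
  cases nonempty_fintype ι
  rw [← Finset.inf_univ_eq_iInf]
  induction (Finset.univ : Finset ι) using Finset.induction_on with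
  | empty => exact fun N => sFinMod_of_smul_mem S.one_mem fun _ _ => mem_top
  | insert i s _ ih => rw [Finset.inf_insert]; exact (h i).inf ih

theorem SNoethMod.of_smul_mem {J J' : Submodule A M} (h : SNoethMod S J') {t : A} (ht : t ∈ S)
    (hJ : ∀ x ∈ J', t • x ∈ J) : SNoethMod S J :=
  fun N => (h N).trans (sFinMod_of_smul_mem ht fun x hx => hJ x hx.2)

theorem SNoethMod.of_map {K : Submodule A M'} {J : Submodule A M} (f : M' →ₗ[A] M)
    (h : SNoethMod S K) (hK : K.map f ≤ J) {s : A} (hs : s ∈ S)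
    (hf : ∀ x, s • x ∈ LinearMap.range f) : SNoethMod S J := by
  intro N
  refine (sFinMod_of_smul_mem hs fun x _ => hf x).trans ?_
  have := (h (N.comap f)).map f
  rw [map_comap_eq, inf_comm] at this
  exact this.mono hK

theorem SFin.exists_fin_span (h : SFin S (⊤ : Submodule A M)) :
    ∃ (n : ℕ) (b : Fin n → M), ∃ s ∈ S, ∀ x, s • x ∈ span A (Set.range b) := by
  obtain ⟨F, hF, -, s, hs, h⟩ := h
  obtain ⟨n, b, rfl⟩ := fg_iff_exists_fin_generating_family.1 hF
  exact ⟨n, b, s, hs, fun x => h x trivial⟩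

theorem SNoethMod.colon_univ (hfin : SFin S (⊤ : Submodule A M)) {N : Submodule A M}
    (hN : SNoethMod S N) : SNoethMod S (N.colon Set.univ) := by
  obtain ⟨n, b, s, hs, hb⟩ := hfin.exists_fin_span
  have hK : SNoethMod S (N.colon (Set.range b)) := by
    rw [← Set.iUnion_singleton_eq_range, colon_iUnion]
    refine .iInf fun i => ?_
    convert hN.comap (LinearMap.toSpanSingleton A M (b i))
    ext
    simp
  refine hK.of_smul_mem hs fun a ha => mem_colon.2 fun x _ => ?_
  rw [← colon_span] at ha
  rw [smul_eq_mul, mul_comm, mul_smul]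
  exact mem_colon.1 ha _ (hb x)

theorem SNoethMod.of_colon_univ (hfin : SFin S (⊤ : Submodule A M)) {N : Submodule A M}
    (hN : SNoethMod S (N.colon Set.univ)) : SNoethMod S N := by
  obtain ⟨n, b, s, hs, hb⟩ := hfin.exists_fin_span
  have hK : SNoethMod S (⨅ i, Submodule.comap
      (LinearMap.proj (R := A) (φ := fun _ : Fin n => A) i) (N.colon Set.univ)) :=
    .iInf fun i => hN.comap _
  have hrange : ∀ x, s • x ∈ LinearMap.range (Fintype.linearCombination A b) := by
    simpa using hb
  refine hK.of_map (Fintype.linearCombination A b) ?_ hs hrange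
  rintro _ ⟨c, hc, rfl⟩
  rw [Fintype.linearCombination_apply]
  exact sum_mem fun i _ => mem_colon.1 (mem_iInf _ |>.1 hc i) _ trivial

theorem exists_maximal_saturation_colon_le (hfin : SFin S (⊤ : Submodule A M))
    (N₀ : Submodule A M) :
    ∃ N, Maximal (fun N : Submodule A M => N₀ ≤ N ∧
      (N.colon Set.univ).saturation S ≤ (N₀.colon Set.univ).saturation S) N := by
  obtain ⟨F, hF, -, s, hs, hsF⟩ := hfin
  suffices hsSup : ∀ c ⊆ {N : Submodule A M | N₀ ≤ N ∧
      (N.colon Set.univ).saturation S ≤ (N₀.colon Set.univ).saturation S},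
      IsChain (· ≤ ·) c → ∀ N ∈ c, sSup c ∈ {N : Submodule A M | N₀ ≤ N ∧
      (N.colon Set.univ).saturation S ≤ (N₀.colon Set.univ).saturation S} by
    obtain ⟨N, -, hN⟩ := zorn_le_nonempty₀ _
      (fun c hc hchain N hN => ⟨sSup c, hsSup c hc hchain N hN, fun _ => le_sSup⟩)
      N₀ ⟨le_rfl, le_rfl⟩
    exact ⟨N, hN⟩
  intro c hc hchain N hN
  refine ⟨(hc hN).1.trans (le_sSup hN), ?_⟩
  rintro a ⟨t, ht, hta⟩
  have hle : F.map (LinearMap.lsmul A M (t * a)) ≤ sSup c :=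
    map_le_iff_le_comap.2 fun x _ => mem_colon.1 hta x trivial
  obtain ⟨N', hN'c, hN'⟩ := (CompleteLattice.isCompactElement_iff_le_of_directed_sSup_le _ _).1
    ((fg_iff_compact _).1 (hF.map _)) c ⟨N, hN⟩ hchain.directedOn hle
  refine (hc hN'c).2 ⟨t * s, mul_mem ht hs, mem_colon.2 fun x _ => ?_⟩
  rw [mul_right_comm, mul_smul]
  exact hN' (mem_map_of_mem (hsF x trivial))

end Module

section Algebra

variable {A B : Type*} [CommRing A] [CommRing B] [Algebra A B] {S : Submonoid A}

theorem mem_colon_univ_restrictScalars {J : Ideal B} {a : A} :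
    a ∈ (J.restrictScalars A).colon Set.univ ↔ algebraMap A B a ∈ J := by
  refine ⟨fun h => by simpa [Algebra.smul_def] using mem_colon.1 h 1 trivial,
    fun h => mem_colon.2 fun β _ => ?_⟩
  rw [restrictScalars_mem, Algebra.smul_def]
  exact J.mul_mem_right β h

theorem exists_maximal_not_sNoethMod (hB : SNoeth (S.map (algebraMap A B)) B) {J : Ideal B}
    (hJ : ¬ SNoethMod S (J.restrictScalars A)) :
    ∃ J₀ : Ideal B, Maximal (fun J : Ideal B => ¬ SNoethMod S (J.restrictScalars A)) J₀ := by
  suffices hsSup : ∀ c : Set (Ideal B), (∀ J ∈ c, ¬ SNoethMod S (J.restrictScalars A)) →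
      IsChain (· ≤ ·) c → c.Nonempty → ¬ SNoethMod S ((sSup c).restrictScalars A) by
    obtain ⟨J₀, -, hJ₀⟩ := zorn_le_nonempty₀ {J : Ideal B | ¬ SNoethMod S (J.restrictScalars A)}
      (fun c hc hchain J hJ => ⟨sSup c, hsSup c hc hchain ⟨J, hJ⟩, fun _ => le_sSup⟩) J hJ
    exact ⟨J₀, hJ₀⟩
  intro c hc hchain hne hgood
  obtain ⟨G, hG, hGc, _, ⟨t, ht, rfl⟩, htG⟩ := hB (sSup c)
  obtain ⟨J, hJc, hGJ⟩ := (CompleteLattice.isCompactElement_iff_le_of_directed_sSup_le _ _).1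
    ((fg_iff_compact _).1 hG) c hne hchain.directedOn hGc
  exact hc J hJc <| hgood.of_smul_mem ht fun x hx =>
    hGJ (by simpa [Algebra.smul_def] using htG x hx)

theorem sFinMod_of_mem_colon (hfin : SFin S (⊤ : Submodule A B)) {J₀ : Ideal B}
    (hgt : ∀ J, J₀ < J → SNoethMod S (J.restrictScalars A)) {N : Submodule A B}
    (hJN : J₀.restrictScalars A ≤ N) {r : A} (hr : r ∈ N.colon Set.univ)
    (hrJ : algebraMap A B r ∉ J₀) : SFinMod S (J₀.restrictScalars A) N := by
  set c := algebraMap A B r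
  have hc : (Ideal.span {c}).restrictScalars A =
      (⊤ : Submodule A B).map (LinearMap.mulLeft A c) := by
    ext x
    simp [Ideal.mem_span_singleton', mul_comm]
  have hlt : J₀ < J₀ ⊔ Ideal.span {c} :=
    left_lt_sup.2 fun h => hrJ (h (Ideal.mem_span_singleton_self c))
  have hcN : (Ideal.span {c}).restrictScalars A ≤ N := by
    rw [hc, map_le_iff_le_comap]
    intro β _
    simpa [Algebra.smul_def] using mem_colon.1 hr β trivial
  have hcfin : SFinMod S (J₀.restrictScalars A) ((Ideal.span {c}).restrictScalars A) := by
    rw [hc]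
    exact (by simpa using (sFinMod_bot_iff.2 hfin).map (LinearMap.mulLeft A c) :
      SFinMod S ⊥ _).mono bot_le
  refine (hgt _ hlt N).trans ?_
  rw [restrictScalars_sup, inf_eq_right.2 (sup_le hJN hcN), sup_comm]
  exact sFinMod_sup_self_iff.2 hcfin

theorem sNoethMod_of_maximal (hfin : SFin S (⊤ : Submodule A B)) {J₀ : Ideal B}
    (hgt : ∀ J, J₀ < J → SNoethMod S (J.restrictScalars A)) {N : Submodule A B}
    (hN : Maximal (fun N : Submodule A B => J₀.restrictScalars A ≤ N ∧
      (N.colon Set.univ).saturation S ≤ ((J₀.restrictScalars A).colon Set.univ).saturation S) N) :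
    SNoethMod S N := by
  intro N'
  rw [← sFinMod_sup_self_iff]
  rcases (le_sup_right : N ≤ N' ⊔ N).lt_or_eq with hlt | heq
  · have hJN' := hN.prop.1.trans hlt.le
    obtain ⟨a, ⟨t, ht, hta⟩, ha⟩ :=
      SetLike.not_le_iff_exists.1 fun h => hN.not_prop_of_gt hlt ⟨hJN', h⟩
    refine (sFinMod_of_mem_colon hfin hgt hJN' hta fun hJ => ha ⟨t, ht, ?_⟩).mono hN.prop.1
    exact mem_colon_univ_restrictScalars.2 hJ
  · rw [← heq]
    exact sFinMod_of_smul_mem S.one_mem fun x hx => by simpa using hx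

theorem sNoethMod_of_forall_gt (hfin : SFin S (⊤ : Submodule A B))
    (hB : SNoeth (S.map (algebraMap A B)) B) {J₀ : Ideal B}
    (hgt : ∀ J, J₀ < J → SNoethMod S (J.restrictScalars A)) :
    SNoethMod S (J₀.restrictScalars A) := by
  obtain ⟨_, ⟨u, hu, rfl⟩, hkill⟩ := Ideal.exists_mem_forall_mul_mem_of_sNoeth hB J₀
  obtain ⟨N, hN⟩ := exists_maximal_saturation_colon_le hfin (J₀.restrictScalars A)
  refine (((sNoethMod_of_maximal hfin hgt hN).colon_univ hfin).of_smul_mem hu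
    fun a ha => ?_).of_colon_univ hfin
  obtain ⟨t, ht, hta⟩ := hN.prop.2 ⟨1, S.one_mem, by rwa [one_mul]⟩
  rw [mem_colon_univ_restrictScalars] at hta ⊢
  simpa using hkill (algebraMap A B a)
    ⟨algebraMap A B t, Submonoid.mem_map_of_mem _ ht, by simpa using hta⟩

theorem sNoethMod_restrictScalars (hfin : SFin S (⊤ : Submodule A B))
    (hB : SNoeth (S.map (algebraMap A B)) B) (J : Ideal B) :
    SNoethMod S (J.restrictScalars A) := by
  by_contra hJ
  obtain ⟨J₀, hJ₀⟩ := exists_maximal_not_sNoethMod hB hJ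
  exact hJ₀.prop <| sNoethMod_of_forall_gt hfin hB fun J hlt =>
    not_not.1 (hJ₀.not_prop_of_gt hlt)

end Algebra

theorem stmt13 {A B : Type*} [CommRing A] [CommRing B] [Algebra A B]
    (hinj : Function.Injective (algebraMap A B)) (S : Submonoid A)
    (hfin : SFin S (⊤ : Submodule A B))
    (hB : SNoeth (S.map (algebraMap A B)) B) : SNoeth S A := by
  have h := (sNoethMod_restrictScalars hfin hB ⊥).comap (Algebra.linearMap A B)
  rwa [restrictScalars_bot, comap_bot, LinearMap.ker_eq_bot_of_injective hinj,
    sNoethMod_bot_iff] at h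
end

section
/- (Relative Hilbert basis theorem) Let A be a commutative ring and S ⊆ A an anti-archimedean multiplicatively closed subset (for every s ∈ S the intersection ⋂ₙ sⁿA meets S). If A is S-noetherian, then the polynomial ring A[X] is S-noetherian (regarding S as a subset of A[X]). -/
theorem Submodule.exists_fg_le_map_eq_s15 {R M P : Type*} [Semiring R] [AddCommMonoid M]
    [Module R M] [AddCommMonoid P] [Module R P] (f : M →ₗ[R] P) {N : Submodule R M}
    {F : Submodule R P} (hF : F.FG) (hFN : F ≤ N.map f) :
    ∃ G : Submodule R M, G.FG ∧ G ≤ N ∧ G.map f = F := by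
  obtain ⟨T, hT, rfl⟩ := Submodule.fg_def.mp hF
  have hTN : T ⊆ f '' N := by
    rw [← Submodule.map_coe]
    exact Submodule.subset_span.trans hFN
  obtain ⟨U, hUN, hU, hUT⟩ := Set.exists_subset_image_finite_and.mp ⟨T, hTN, hT, rfl⟩
  exact ⟨Submodule.span R U, Submodule.fg_def.mpr ⟨U, hU, rfl⟩, Submodule.span_le.mpr hUN,
    by rw [Submodule.map_span, hUT]⟩

section

variable {A : Type*} [CommRing A] {S : Submonoid A}

open Polynomial

theorem SFin.of_map_of_inf_ker {M P : Type*} [AddCommGroup M] [Module A M] [AddCommGroup P]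
    [Module A P] (f : M →ₗ[A] P) {N : Submodule A M} (hmap : SFin S (N.map f))
    (hker : SFin S (N ⊓ LinearMap.ker f)) : SFin S N := by
  obtain ⟨F₁, hF₁, hF₁N, s₁, hs₁, hsF₁⟩ := hmap
  obtain ⟨G, hG, hGN, rfl⟩ := Submodule.exists_fg_le_map_eq_s15 f hF₁ hF₁N
  obtain ⟨F₀, hF₀, hF₀N, s₀, hs₀, hsF₀⟩ := hker
  refine ⟨F₀ ⊔ G, hF₀.sup hG, sup_le (hF₀N.trans inf_le_left) hGN, s₀ * s₁,
    S.mul_mem hs₀ hs₁, fun x hx => ?_⟩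
  obtain ⟨g, hg, hgx⟩ := hsF₁ (f x) ⟨x, hx, rfl⟩
  have hker : s₁ • x - g ∈ N ⊓ LinearMap.ker f :=
    ⟨N.sub_mem (N.smul_mem s₁ hx) (hGN hg), by simp [hgx]⟩
  have hsplit : (s₀ * s₁) • x = s₀ • (s₁ • x - g) + s₀ • g := by
    rw [smul_sub, sub_add_cancel, mul_smul]
  rw [hsplit]
  exact Submodule.add_mem_sup (hsF₀ _ hker) (G.smul_mem s₀ hg)

theorem SNoeth.sFin_of_le_degreeLT (hA : SNoeth S A) {n : ℕ} {M : Submodule A A[X]}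
    (hM : M ≤ degreeLT A n) : SFin S M := by
  induction n generalizing M with
  | zero =>
    refine ⟨⊥, Submodule.fg_bot, bot_le, 1, S.one_mem, fun x hx => ?_⟩
    have hx0 : x = 0 := by simpa [mem_degreeLT] using hM hx
    simp [hx0]
  | succ n ih =>
    refine SFin.of_map_of_inf_ker (lcoeff A n) (hA _) (ih fun x ⟨hxM, hxn⟩ => ?_)
    rw [mem_degreeLT, degree_lt_iff_coeff_zero]
    intro m hm
    rcases (Nat.cast_le.mp hm).eq_or_lt with rfl | hlt
    · exact hxn
    · exact (degree_lt_iff_coeff_zero x (n + 1)).mp (mem_degreeLT.mp (hM hxM)) m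
        (Nat.cast_le.mpr hlt)

theorem exists_mem_span_degree_le_coeff_eq {P : Set A[X]} {n : ℕ}
    (hP : ∀ p ∈ P, p.natDegree ≤ n) {a : A} (ha : a ∈ Ideal.span (leadingCoeff '' P)) :
    ∃ h ∈ Ideal.span P, h.degree ≤ n ∧ h.coeff n = a := by
  induction ha using Submodule.span_induction with
  | mem x hx =>
    obtain ⟨p, hp, rfl⟩ := hx
    refine ⟨X ^ (n - p.natDegree) * p, Ideal.mul_mem_left _ _ (Ideal.subset_span hp), ?_, ?_⟩
    · refine degree_le_of_natDegree_le (natDegree_mul_le.trans ?_)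
      have := natDegree_X_pow_le (R := A) (n - p.natDegree)
      have := hP p hp
      omega
    · rw [coeff_X_pow_mul', if_pos (Nat.sub_le _ _), Nat.sub_sub_self (hP p hp),
        coeff_natDegree]
  | zero => exact ⟨0, Submodule.zero_mem _, by simp, by simp⟩
  | add x y _ _ hx hy =>
    obtain ⟨g, hg, hgdeg, rfl⟩ := hx
    obtain ⟨h, hh, hhdeg, rfl⟩ := hy
    exact ⟨g + h, add_mem hg hh, (degree_add_le g h).trans (max_le hgdeg hhdeg), coeff_add ..⟩
  | smul c x _ hx =>
    obtain ⟨h, hh, hdeg, rfl⟩ := hx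
    exact ⟨c • h, Submodule.smul_of_tower_mem _ c hh, (degree_smul_le c h).trans hdeg,
      coeff_smul ..⟩

theorem exists_mem_span_degree_smul_sub_lt {P : Set A[X]} {f : A[X]} {s : A}
    (hP : ∀ p ∈ P, p.natDegree ≤ f.natDegree)
    (hs : s * f.leadingCoeff ∈ Ideal.span (leadingCoeff '' P)) :
    ∃ h ∈ Ideal.span P, (s • f - h).degree < f.natDegree := by
  obtain ⟨h, hh, hdeg, hcoeff⟩ := exists_mem_span_degree_le_coeff_eq hP hs
  have hle : (s • f - h).degree ≤ f.natDegree :=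
    (degree_sub_le _ _).trans (max_le ((degree_smul_le _ _).trans degree_le_natDegree) hdeg)
  have htop : (s • f - h).coeff f.natDegree = 0 := by
    rw [coeff_sub, coeff_smul, coeff_natDegree, hcoeff, smul_eq_mul, sub_self]
  exact ⟨h, hh, hle.lt_of_ne fun heq => coeff_ne_zero_of_eq_degree heq htop⟩

theorem exists_pow_smul_mem_sup_degreeLT {I : Ideal A[X]} {P : Set A[X]}
    (hPI : P ⊆ I) {N : ℕ} (hPN : ∀ p ∈ P, p.natDegree < N) {s : A}
    (hs : ∀ f ∈ I, s * f.leadingCoeff ∈ Ideal.span (leadingCoeff '' P)) {f : A[X]}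
    (hf : f ∈ I) :
    ∃ m : ℕ, s ^ m • f ∈
      (Ideal.span P).restrictScalars A ⊔ (I.restrictScalars A ⊓ degreeLT A N) := by
  obtain ⟨n, hdeg⟩ : ∃ n : ℕ, f.degree < n :=
    ⟨f.natDegree + 1, degree_le_natDegree.trans_lt (by exact_mod_cast Nat.lt_succ_self _)⟩
  induction n generalizing f with
  | zero =>
    obtain rfl : f = 0 := by simpa using hdeg
    exact ⟨0, by simp⟩
  | succ n ih =>
    by_cases hfN : f.degree < N
    · refine ⟨0, ?_⟩
      rw [pow_zero, one_smul]
      exact Submodule.mem_sup_right ⟨hf, mem_degreeLT.mpr hfN⟩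
    have hf0 : f ≠ 0 := by rintro rfl; simp at hfN
    have hNf : N ≤ f.natDegree := by
      rw [not_lt, degree_eq_natDegree hf0] at hfN
      exact_mod_cast hfN
    obtain ⟨h, hh, hlt⟩ :=
      exists_mem_span_degree_smul_sub_lt (fun p hp => (hPN p hp).le.trans hNf) (hs f hf)
    have hfn : f.natDegree ≤ n :=
      Nat.lt_succ_iff.mp ((natDegree_lt_iff_degree_lt hf0).mpr hdeg)
    obtain ⟨m, hm⟩ :=
      ih (I.sub_mem (Submodule.smul_of_tower_mem _ s hf) (Ideal.span_le.mpr hPI hh))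
        (hlt.trans_le (Nat.cast_le.mpr hfn))
    refine ⟨m + 1, ?_⟩
    rw [show s ^ (m + 1) • f = s ^ m • (s • f - h) + s ^ m • h by
      rw [pow_succ, mul_smul, smul_sub, sub_add_cancel]]
    exact add_mem hm (Submodule.mem_sup_left (Submodule.smul_of_tower_mem _ _ hh))

theorem Ideal.exists_finite_subset_span_leadingCoeff_eq {I : Ideal A[X]} {L : Ideal A}
    (hL : L.FG) (hLI : L ≤ I.leadingCoeff) :
    ∃ P ⊆ (I : Set A[X]), P.Finite ∧ Ideal.span (Polynomial.leadingCoeff '' P) = L := by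
  obtain ⟨T, hT, rfl⟩ := Submodule.fg_def.mp hL
  have hTI : T ⊆ Polynomial.leadingCoeff '' I := fun a ha =>
    (I.mem_leadingCoeff a).mp (hLI (Submodule.subset_span ha))
  obtain ⟨P, hPI, hP, hPT⟩ := Set.exists_subset_image_finite_and.mp ⟨T, hTI, hT, rfl⟩
  exact ⟨P, hPI, hP, by rw [hPT]⟩

theorem SFin.map_algebraMap_of_smul_mem_sup {B : Type*} [CommRing B] [Algebra A B]
    {I J : Ideal B} {M : Submodule A B} (hJ : J.FG) (hJI : J ≤ I) (hM : SFin S M)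
    (hMI : M ≤ I.restrictScalars A) {t : A} (ht : t ∈ S)
    (htI : ∀ x ∈ I, t • x ∈ J.restrictScalars A ⊔ M) :
    SFin (S.map (algebraMap A B)) I := by
  obtain ⟨F, hF, hFM, s, hs, hsF⟩ := hM
  obtain ⟨T, hT, rfl⟩ := Submodule.fg_def.mp hF
  refine ⟨J ⊔ Ideal.span T, Submodule.FG.sup hJ (Submodule.fg_def.mpr ⟨T, hT, rfl⟩),
    sup_le hJI (Ideal.span_le.mpr fun x hx => hMI (hFM (Submodule.subset_span hx))),
    algebraMap A B (s * t), ⟨s * t, S.mul_mem hs ht, rfl⟩, fun x hx => ?_⟩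
  obtain ⟨j, hj, m, hm, hjm⟩ := Submodule.mem_sup.mp (htI x hx)
  rw [algebraMap_smul, mul_smul, ← hjm, smul_add]
  refine add_mem (Submodule.mem_sup_left (Submodule.smul_of_tower_mem _ s hj))
    (Submodule.mem_sup_right ?_)
  exact Submodule.span_le_restrictScalars A B T (hsF m hm)

end

theorem stmt15 {A : Type*} [CommRing A] (S : Submonoid A)
    (hanti : ∀ s ∈ S, ∃ t ∈ S, ∀ n : ℕ, s ^ n ∣ t)
    (hA : SNoeth S A) :
    SNoeth (S.map (Polynomial.C : A →+* Polynomial A)) (Polynomial A) := by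
  intro I
  obtain ⟨L, hL, hLI, s, hs, hsL⟩ := hA (Ideal.leadingCoeff I)
  obtain ⟨P, hPI, hP, rfl⟩ := Ideal.exists_finite_subset_span_leadingCoeff_eq hL hLI
  obtain ⟨d, hd⟩ := (hP.image Polynomial.natDegree).bddAbove
  obtain ⟨t, ht, hst⟩ := hanti s hs
  rw [← Polynomial.algebraMap_eq]
  refine SFin.map_algebraMap_of_smul_mem_sup
    (M := I.restrictScalars A ⊓ Polynomial.degreeLT A (d + 1))
    (Submodule.fg_def.mpr ⟨P, hP, rfl⟩) (Ideal.span_le.mpr hPI)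
    (hA.sFin_of_le_degreeLT inf_le_right) inf_le_left ht fun f hf => ?_
  obtain ⟨m, hm⟩ := exists_pow_smul_mem_sup_degreeLT hPI
    (fun p hp => Nat.lt_succ_of_le (hd ⟨p, hp, rfl⟩))
    (fun g hg => hsL _ ((Ideal.mem_leadingCoeff I _).mpr ⟨g, hg, rfl⟩)) hf
  obtain ⟨u, rfl⟩ := hst m
  rw [mul_comm, mul_smul]
  exact Submodule.smul_mem _ u hm
end
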